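/- Let H be a d×d complex Hermitian matrix with H² = I, and set U(θ) := exp(−i(θ/2)H). Then for every d×d complex matrix ρ and every real θ, the map θ ↦ U(θ) ρ U(θ)† is differentiable with derivative (d/dθ)[U(θ) ρ U(θ)†] = (1/2)·[ U(θ+π/2) ρ U(θ+π/2)† − U(θ−π/2) ρ U(θ−π/2)† ] (the parameter-shift rule at the operator level). -/

import Mathlib

open Matrix

section ExpFormula

attribute [local instance] Matrix.linftyOpNormedRing Matrix.linftyOpNormedAlgebra

/-- Exponential of a scalar multiple of an involution. -/
lemma exp_smul_involution {d : ℕ} (H : Matrix (Fin d) (Fin d) ℂ) (hH2 : H ^ 2 = 1) (z : ℂ) :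
    NormedSpace.exp (z • H)
      = Complex.exp z • ((2⁻¹ : ℂ) • (1 + H)) + Complex.exp (-z) • ((2⁻¹ : ℂ) • (1 - H)) := by
  have hHH : H * H = 1 := by rw [← pow_two]; exact hH2
  set P : Matrix (Fin d) (Fin d) ℂ := (2⁻¹ : ℂ) • (1 + H) with hP
  set Q : Matrix (Fin d) (Fin d) ℂ := (2⁻¹ : ℂ) • (1 - H) with hQ
  have hPQ : P + Q = 1 := by rw [hP, hQ, ← smul_add]; module
  have hmulPQ : ∀ a b c e : ℂ, (a • P + b • Q) * (c • P + e • Q)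
      = (a * c) • P + (b * e) • Q := by
    intro a b c e
    rw [hP, hQ]
    simp only [smul_smul, Matrix.smul_mul, Matrix.mul_smul, add_mul, mul_add, mul_one, one_mul,
      sub_mul, mul_sub, hHH]
    module
  let φ : (ℂ × ℂ) →ₐ[ℂ] Matrix (Fin d) (Fin d) ℂ :=
    { toFun := fun p => p.1 • P + p.2 • Q
      map_one' := by simpa using hPQ
      map_mul' := fun p q => by simpa using (hmulPQ p.1 p.2 q.1 q.2).symm
      map_zero' := by simp
      map_add' := fun p q => by simp [add_smul]; abel
      commutes' := fun r => by
        simp [Algebra.algebraMap_eq_smul_one, Prod.smul_def, ← smul_add, hPQ] }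
  have hφc : Continuous φ := φ.toLinearMap.continuous_of_finiteDimensional
  have hzH : z • H = φ (z, -z) := by
    show z • H = z • P + (-z) • Q
    rw [hP, hQ, smul_smul, smul_smul]
    module
  rw [hzH]; refine (NormedSpace.map_exp φ hφc (z, -z)).symm.trans ?_
  have hexp : NormedSpace.exp ((z, -z) : ℂ × ℂ) = (Complex.exp z, Complex.exp (-z)) := by
    ext
    · simp [Complex.exp_eq_exp_ℂ]
    · simp [Complex.exp_eq_exp_ℂ]
  rw [hexp]
  rfl

end ExpFormula

attribute [local instance] Matrix.normedAddCommGroup Matrix.normedSpace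

/-- Pauli rotation `U(θ) = exp(-i(θ/2)H)` generated by a Hermitian involution `H`. -/
noncomputable def pauliRot {d : ℕ} (H : Matrix (Fin d) (Fin d) ℂ) (θ : ℝ) :
    Matrix (Fin d) (Fin d) ℂ :=
  NormedSpace.exp ((-(Complex.I * (θ / 2 : ℂ))) • H)

section Aux

variable {d : ℕ} (H : Matrix (Fin d) (Fin d) ℂ)

lemma pauliRot_eq (hH2 : H ^ 2 = 1) (t : ℝ) :
    pauliRot H t
      = Complex.exp (-(Complex.I * (t / 2 : ℂ))) • ((2⁻¹ : ℂ) • (1 + H))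
        + Complex.exp (Complex.I * (t / 2 : ℂ)) • ((2⁻¹ : ℂ) • (1 - H)) := by
  rw [pauliRot, exp_smul_involution H hH2, neg_neg]

lemma pauliRot_conj_eq (hH : H.IsHermitian) (hH2 : H ^ 2 = 1)
    (ρ : Matrix (Fin d) (Fin d) ℂ) (t : ℝ) :
    pauliRot H t * ρ * (pauliRot H t)ᴴ
      = (((2⁻¹ : ℂ) • (1 + H)) * ρ * ((2⁻¹ : ℂ) • (1 + H))
          + ((2⁻¹ : ℂ) • (1 - H)) * ρ * ((2⁻¹ : ℂ) • (1 - H)))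
        + Complex.exp (-(Complex.I * (t : ℂ))) • (((2⁻¹ : ℂ) • (1 + H)) * ρ * ((2⁻¹ : ℂ) • (1 - H)))
        + Complex.exp (Complex.I * (t : ℂ)) • (((2⁻¹ : ℂ) • (1 - H)) * ρ * ((2⁻¹ : ℂ) • (1 + H))) := by
  have hstar : ∀ z : ℂ, star (Complex.exp z) = Complex.exp (star z) := fun z =>
    (Complex.exp_conj z).symm
  have h1 : star (-(Complex.I * ((t : ℂ) / 2))) = Complex.I * ((t : ℂ) / 2) := by
    simp [Complex.star_def, map_neg, _root_.map_mul, map_div₀, Complex.conj_I,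
      Complex.conj_ofReal]
  have h2 : star (Complex.I * ((t : ℂ) / 2)) = -(Complex.I * ((t : ℂ) / 2)) := by
    simp [Complex.star_def, _root_.map_mul, map_div₀, Complex.conj_I, Complex.conj_ofReal]
  have hct : (pauliRot H t)ᴴ
      = Complex.exp (Complex.I * ((t : ℂ) / 2)) • ((2⁻¹ : ℂ) • (1 + H))
        + Complex.exp (-(Complex.I * ((t : ℂ) / 2))) • ((2⁻¹ : ℂ) • (1 - H)) := by
    rw [pauliRot_eq H hH2]
    simp only [conjTranspose_add, conjTranspose_smul, conjTranspose_sub, conjTranspose_one,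
      hH.eq, hstar, h1, h2]
    norm_num
  have expand : ∀ (a b c e : ℂ) (A B C D : Matrix (Fin d) (Fin d) ℂ),
      (a • A + b • B) * ρ * (c • C + e • D)
        = (a * c) • (A * ρ * C) + (a * e) • (A * ρ * D)
          + (b * c) • (B * ρ * C) + (b * e) • (B * ρ * D) := by
    intro a b c e A B C D
    simp only [Matrix.add_mul, Matrix.mul_add, Matrix.smul_mul, Matrix.mul_smul, smul_smul]
    module
  have hexp0 : Complex.exp (-(Complex.I * ((t : ℂ) / 2))) * Complex.exp (Complex.I * ((t : ℂ) / 2)) = 1 := by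
    rw [← Complex.exp_add]; simp
  have hexp0' : Complex.exp (Complex.I * ((t : ℂ) / 2)) * Complex.exp (-(Complex.I * ((t : ℂ) / 2))) = 1 := by
    rw [← Complex.exp_add]; simp
  have hexpm : Complex.exp (-(Complex.I * ((t : ℂ) / 2))) * Complex.exp (-(Complex.I * ((t : ℂ) / 2)))
      = Complex.exp (-(Complex.I * (t : ℂ))) := by
    rw [← Complex.exp_add]; ring_nf
  have hexpp : Complex.exp (Complex.I * ((t : ℂ) / 2)) * Complex.exp (Complex.I * ((t : ℂ) / 2))
      = Complex.exp (Complex.I * (t : ℂ)) := by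
    rw [← Complex.exp_add]; ring_nf
  rw [hct, pauliRot_eq H hH2, expand, hexp0, hexp0', hexpm, hexpp]
  simp only [one_smul]
  abel

end Aux

/-- **Parameter-shift rule at the operator level.** For Hermitian `H` with `H² = I` and
`U(θ) = exp(-i(θ/2)H)`, the map `θ ↦ U(θ) ρ U(θ)†` has derivative
`(1/2)[U(θ+π/2) ρ U(θ+π/2)† - U(θ-π/2) ρ U(θ-π/2)†]`. -/
theorem parameter_shift_operator (d : ℕ) (H : Matrix (Fin d) (Fin d) ℂ)
    (hH : H.IsHermitian) (hH2 : H ^ 2 = 1) (ρ : Matrix (Fin d) (Fin d) ℂ) (θ : ℝ) :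
    HasDerivAt (fun t : ℝ => pauliRot H t * ρ * (pauliRot H t)ᴴ)
      ((1 / 2 : ℂ) •
        (pauliRot H (θ + Real.pi / 2) * ρ * (pauliRot H (θ + Real.pi / 2))ᴴ
          - pauliRot H (θ - Real.pi / 2) * ρ * (pauliRot H (θ - Real.pi / 2))ᴴ)) θ := by
  set P : Matrix (Fin d) (Fin d) ℂ := (2⁻¹ : ℂ) • (1 + H) with hPdef
  set Q : Matrix (Fin d) (Fin d) ℂ := (2⁻¹ : ℂ) • (1 - H) with hQdef
  set C0 : Matrix (Fin d) (Fin d) ℂ := P * ρ * P + Q * ρ * Q with hC0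
  set M1 : Matrix (Fin d) (Fin d) ℂ := P * ρ * Q with hM1
  set M2 : Matrix (Fin d) (Fin d) ℂ := Q * ρ * P with hM2
  have hrep : ∀ t : ℝ, pauliRot H t * ρ * (pauliRot H t)ᴴ
      = C0 + Complex.exp (-(Complex.I * (t : ℂ))) • M1 + Complex.exp (Complex.I * (t : ℂ)) • M2 :=
    fun t => pauliRot_conj_eq H hH hH2 ρ t
  -- derivative of the scalar coefficient functions
  have hd1 : HasDerivAt (fun t : ℝ => Complex.exp (-(Complex.I * (t : ℂ))))
      (Complex.exp (-(Complex.I * (θ : ℂ))) * -Complex.I) θ := by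
    have hc : HasDerivAt (fun z : ℂ => Complex.exp (-(Complex.I * z)))
        (Complex.exp (-(Complex.I * (θ : ℂ))) * -Complex.I) (θ : ℂ) := by
      have := (((hasDerivAt_id ((θ : ℂ)))).const_mul (-Complex.I)).cexp
      simpa [neg_mul, mul_comm] using this
    exact hc.comp_ofReal
  have hd2 : HasDerivAt (fun t : ℝ => Complex.exp (Complex.I * (t : ℂ)))
      (Complex.exp (Complex.I * (θ : ℂ)) * Complex.I) θ := by
    have hc : HasDerivAt (fun z : ℂ => Complex.exp (Complex.I * z))
        (Complex.exp (Complex.I * (θ : ℂ)) * Complex.I) (θ : ℂ) := by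
      have := (((hasDerivAt_id ((θ : ℂ)))).const_mul Complex.I).cexp
      simpa [mul_comm] using this
    exact hc.comp_ofReal
  have hd : HasDerivAt
      (fun t : ℝ => C0 + Complex.exp (-(Complex.I * (t : ℂ))) • M1
        + Complex.exp (Complex.I * (t : ℂ)) • M2)
      ((Complex.exp (-(Complex.I * (θ : ℂ))) * -Complex.I) • M1
        + (Complex.exp (Complex.I * (θ : ℂ)) * Complex.I) • M2) θ := by
    have := ((hasDerivAt_const θ C0).add (hd1.smul_const M1)).add (hd2.smul_const M2)
    simp only [Pi.add_def, zero_add] at this; exact this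
  have hfun : (fun t : ℝ => pauliRot H t * ρ * (pauliRot H t)ᴴ)
      = fun t : ℝ => C0 + Complex.exp (-(Complex.I * (t : ℂ))) • M1
        + Complex.exp (Complex.I * (t : ℂ)) • M2 := funext hrep
  rw [hfun, hrep (θ + Real.pi / 2), hrep (θ - Real.pi / 2)]
  -- exponential values at the shifted points
  have hep : Complex.exp (-(Complex.I * ((Real.pi / 2 : ℝ) : ℂ))) = -Complex.I := by
    have h : (-(Complex.I * ((Real.pi / 2 : ℝ) : ℂ))) = ((-(Real.pi / 2) : ℝ) : ℂ) * Complex.I := by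
      push_cast; ring
    rw [h, Complex.exp_mul_I]
    simp [← Complex.ofReal_cos, ← Complex.ofReal_sin, Real.cos_pi_div_two, Real.sin_pi_div_two]
  have hem : Complex.exp (Complex.I * ((Real.pi / 2 : ℝ) : ℂ)) = Complex.I := by
    have h : (Complex.I * ((Real.pi / 2 : ℝ) : ℂ)) = ((Real.pi / 2 : ℝ) : ℂ) * Complex.I := by ring
    rw [h, Complex.exp_mul_I]
    simp [← Complex.ofReal_cos, ← Complex.ofReal_sin, Real.cos_pi_div_two, Real.sin_pi_div_two]
  have ha1 : Complex.exp (-(Complex.I * ((θ + Real.pi / 2 : ℝ) : ℂ)))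
      = Complex.exp (-(Complex.I * (θ : ℂ))) * -Complex.I := by
    have h : (-(Complex.I * ((θ + Real.pi / 2 : ℝ) : ℂ)))
        = -(Complex.I * (θ : ℂ)) + -(Complex.I * ((Real.pi / 2 : ℝ) : ℂ)) := by push_cast; ring
    rw [h, Complex.exp_add, hep]
  have ha2 : Complex.exp (-(Complex.I * ((θ - Real.pi / 2 : ℝ) : ℂ)))
      = Complex.exp (-(Complex.I * (θ : ℂ))) * Complex.I := by
    have h : (-(Complex.I * ((θ - Real.pi / 2 : ℝ) : ℂ)))
        = -(Complex.I * (θ : ℂ)) + Complex.I * ((Real.pi / 2 : ℝ) : ℂ) := by push_cast; ring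
    rw [h, Complex.exp_add, hem]
  have hb1 : Complex.exp (Complex.I * ((θ + Real.pi / 2 : ℝ) : ℂ))
      = Complex.exp (Complex.I * (θ : ℂ)) * Complex.I := by
    have h : (Complex.I * ((θ + Real.pi / 2 : ℝ) : ℂ))
        = Complex.I * (θ : ℂ) + Complex.I * ((Real.pi / 2 : ℝ) : ℂ) := by push_cast; ring
    rw [h, Complex.exp_add, hem]
  have hb2 : Complex.exp (Complex.I * ((θ - Real.pi / 2 : ℝ) : ℂ))
      = Complex.exp (Complex.I * (θ : ℂ)) * -Complex.I := by
    have h : (Complex.I * ((θ - Real.pi / 2 : ℝ) : ℂ))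
        = Complex.I * (θ : ℂ) + -(Complex.I * ((Real.pi / 2 : ℝ) : ℂ)) := by push_cast; ring
    rw [h, Complex.exp_add, hep]
  have hval : ((1 / 2 : ℂ) •
      ((C0 + Complex.exp (-(Complex.I * ((θ + Real.pi / 2 : ℝ) : ℂ))) • M1
          + Complex.exp (Complex.I * ((θ + Real.pi / 2 : ℝ) : ℂ)) • M2)
        - (C0 + Complex.exp (-(Complex.I * ((θ - Real.pi / 2 : ℝ) : ℂ))) • M1
          + Complex.exp (Complex.I * ((θ - Real.pi / 2 : ℝ) : ℂ)) • M2)))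
      = (Complex.exp (-(Complex.I * (θ : ℂ))) * -Complex.I) • M1
        + (Complex.exp (Complex.I * (θ : ℂ)) * Complex.I) • M2 := by
    rw [ha1, ha2, hb1, hb2]
    module
  rw [hval]
  exact hd
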